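/- With ρ_{k,r} as above: for each pair of integers (k,r) with k ≥ 0 and r odd, the polynomials ρ_{k,r}, ρ_{k,r+2}, …, ρ_{k,r+2⌊k/2⌋} ∈ ℂ[ω,β] are linearly independent over ℂ. -/

import Mathlib

open PowerSeries

noncomputable abbrev Stmt8.Pω : PowerSeries (MvPolynomial (Fin 2) ℂ) :=
  PowerSeries.C (MvPolynomial.X 0)

noncomputable abbrev Stmt8.Pβ : PowerSeries (MvPolynomial (Fin 2) ℂ) :=
  PowerSeries.C (MvPolynomial.X 1)

/-!
The differential equation for `D` forces `D (s + 2) = (1 + h) * D s`, so `ρ_{k,r+2j}` is the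
`k`-th coefficient of `(1 + h) ^ j * G r`, and a vanishing combination `∑ⱼ cⱼ ρ_{k,r+2j}`
says `coeff k (P (1 + h) * G r) = 0` for a polynomial `P` of degree at most `k / 2`.

Since `h = √(1 + β t²)`, the series `P (1 + h)` is a power series in `β t²` with complex
coefficients. Its coefficients up to `t ^ k` vanish: if the first nonzero one is
`c β ^ i t ^ (2i)`, divide `coeff k (P (1 + h) * G r)` by `β ^ i` and set `β = 0`; there
`G r` becomes a nonzero multiple of `exp (-ω t)`, none of whose coefficients vanish,
leaving `c = 0`.
On the other hand `1 + h - 2` has order exactly `2`, so `P (1 + h)` has order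
`2 · mult₂ P ≤ k` unless `P = 0`.
-/

namespace PowerSeries

instance {R : Type*} [CommSemiring R] [CharZero R] : CharZero R⟦X⟧ :=
  RingHom.charZero constantCoeff

@[simp]
theorem constantCoeff_map {R S : Type*} [CommSemiring R] [CommSemiring S] (f : R →+* S)
    (φ : R⟦X⟧) : constantCoeff (map f φ) = f (constantCoeff φ) := by
  rw [← coeff_zero_eq_constantCoeff_apply, coeff_map, coeff_zero_eq_constantCoeff_apply]

theorem order_eq_zero_of_constantCoeff_ne_zero {R : Type*} [Semiring R] {f : R⟦X⟧}
    (hf : constantCoeff f ≠ 0) : f.order = 0 :=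
  not_not.1 (mt order_ne_zero_iff_constCoeff_eq_zero.1 hf)

theorem derivative_map {R S : Type*} [CommSemiring R] [CommSemiring S] (φ : R →+* S)
    (f : R⟦X⟧) : d⁄dX S (f.map φ) = (d⁄dX R f).map φ := by
  ext n
  simp [coeff_derivative, coeff_map]

theorem eq_C_of_derivative_eq_zero {R : Type*} [CommRing R] [IsAddTorsionFree R] {f : R⟦X⟧}
    (hf : d⁄dX R f = 0) : f = C (constantCoeff f) :=
  derivative.ext (by rw [hf, derivative_C]) (by rw [constantCoeff_C])

section Domain

variable {R : Type*} [CommRing R] [IsDomain R]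

theorem eq_zero_of_mul_derivative_eq_mul [CharZero R] {u v F : R⟦X⟧}
    (hu : constantCoeff u ≠ 0) (hF : constantCoeff F = 0) (h : u * d⁄dX R F = v * F) :
    F = 0 := by
  by_contra hne
  obtain ⟨n, hn⟩ : ∃ n : ℕ, F.order = (n + 1 : ℕ) := by
    have h1 : F.order ≠ 0 := order_ne_zero_iff_constCoeff_eq_zero.2 hF
    rw [← coe_toNat_order hne] at h1 ⊢
    exact ⟨F.order.toNat - 1, by congr 1; norm_cast at h1; omega⟩
  have hF' : (d⁄dX R F).order = n := by
    obtain ⟨hFn, hFi⟩ := order_eq_nat.1 hn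
    refine order_eq_nat.2 ⟨?_, fun i hi => ?_⟩
    · rw [coeff_derivative]
      exact mul_ne_zero hFn (by exact_mod_cast n.succ_ne_zero)
    · rw [coeff_derivative, hFi (i + 1) (by omega), zero_mul]
  have hL : (u * d⁄dX R F).order = n := by
    rw [order_mul, hF', order_eq_zero_of_constantCoeff_ne_zero hu, zero_add]
  have hR : coeff n (v * F) = 0 :=
    coeff_mul_of_lt_order (by rw [hn]; exact_mod_cast n.lt_succ_self)
  exact (order_eq_nat.1 hL).1 (h ▸ hR)

theorem eq_of_sq_eq_sq [CharZero R] {f g : R⟦X⟧} (h : f ^ 2 = g ^ 2)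
    (h0 : constantCoeff f = constantCoeff g) (hg0 : constantCoeff g ≠ 0) : f = g := by
  refine (sq_eq_sq_iff_eq_or_eq_neg.1 h).resolve_right fun hfg => hg0 ?_
  have := congrArg constantCoeff hfg
  rw [map_neg, h0] at this
  exact CharZero.eq_neg_self_iff.1 this

theorem coeff_ne_zero_of_derivative_eq_C_mul {E : R⟦X⟧} {a : R} (ha : a ≠ 0)
    (hE : d⁄dX R E = C a * E) (hE0 : constantCoeff E ≠ 0) (n : ℕ) : coeff n E ≠ 0 := by
  induction n with
  | zero => rwa [coeff_zero_eq_constantCoeff]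
  | succ n ih =>
    intro hn
    have := congrArg (coeff n) hE
    rw [coeff_derivative, coeff_C_mul, hn, zero_mul] at this
    exact mul_ne_zero ha ih this.symm

theorem order_aeval {K : Type*} [Field K] [Algebra K R] (f : R⟦X⟧) (a : K)
    (hf : constantCoeff f = algebraMap K R a) {p : Polynomial K} (hp : p ≠ 0) :
    (Polynomial.aeval f p).order =
      p.rootMultiplicity a • (f - algebraMap K R⟦X⟧ a).order := by
  obtain ⟨q, hpq, hq⟩ := p.exists_eq_pow_rootMultiplicity_mul_and_not_dvd hp a
  have hq0 : (Polynomial.aeval f q).order = 0 := by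
    refine order_eq_zero_of_constantCoeff_ne_zero ?_
    have hC : constantCoeff.comp (algebraMap K R⟦X⟧) = algebraMap K R :=
      RingHom.ext fun _ => rfl
    rw [Polynomial.aeval_def, Polynomial.hom_eval₂, hf, hC, Polynomial.eval₂_at_apply]
    exact (map_ne_zero_iff _ (algebraMap K R).injective).2
      fun h0 => hq (Polynomial.dvd_iff_isRoot.2 h0)
  conv_lhs => rw [hpq]
  rw [map_mul, map_pow, order_mul, order_pow, hq0, add_zero, map_sub, Polynomial.aeval_X,
    Polynomial.aeval_C]

end Domain

end PowerSeries

local notation "ℂ[ω,β]" => MvPolynomial (Fin 2) ℂ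
local notation "ω" => (MvPolynomial.X 0 : MvPolynomial (Fin 2) ℂ)
local notation "β" => (MvPolynomial.X 1 : MvPolynomial (Fin 2) ℂ)

namespace Stmt8

/-- The monomial carried by `t ^ n` in a power series in `β t²`. -/
noncomputable def βPow (n : ℕ) : ℂ[ω,β] := if Even n then β ^ (n / 2) else 0

theorem βPow_mul_mem (a b : ℕ) : βPow a * βPow b ∈ ℂ ∙ βPow (a + b) := by
  by_cases ha : Even a
  · by_cases hb : Even b
    · obtain ⟨x, rfl⟩ := ha
      obtain ⟨y, rfl⟩ := hb
      have e (z : ℕ) : βPow (z + z) = β ^ z := by simp [βPow, ← two_mul]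
      rw [e, e, show x + x + (y + y) = x + y + (x + y) by ring, e, pow_add]
      exact Submodule.mem_span_singleton_self _
    · simp [βPow, hb]
  · simp [βPow, ha]

theorem mul_mem_span_βPow {x y : ℂ[ω,β]} {a b : ℕ} (hx : x ∈ ℂ ∙ βPow a)
    (hy : y ∈ ℂ ∙ βPow b) : x * y ∈ ℂ ∙ βPow (a + b) := by
  obtain ⟨c, rfl⟩ := Submodule.mem_span_singleton.1 hx
  obtain ⟨d, rfl⟩ := Submodule.mem_span_singleton.1 hy
  rw [smul_mul_smul_comm]
  exact Submodule.smul_mem _ _ (βPow_mul_mem a b)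

theorem pow_succ_dvd_βPow {i n : ℕ} (h : 2 * i < n) : β ^ (i + 1) ∣ βPow n := by
  unfold βPow
  split_ifs with hn
  · obtain ⟨x, rfl⟩ := hn
    exact pow_dvd_pow _ (by omega)
  · exact dvd_zero _

noncomputable def seriesInβXSq : Subalgebra ℂ ℂ[ω,β]⟦X⟧ where
  carrier := {f | ∀ n, coeff n f ∈ ℂ ∙ βPow n}
  mul_mem' {f g} hf hg n := by
    rw [coeff_mul]
    refine Submodule.sum_mem _ fun p hp => ?_
    rw [← Finset.HasAntidiagonal.mem_antidiagonal.1 hp]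
    exact mul_mem_span_βPow (hf p.1) (hg p.2)
  add_mem' hf hg n := by
    rw [map_add]
    exact add_mem (hf n) (hg n)
  algebraMap_mem' c n := by
    rw [PowerSeries.algebraMap_apply, coeff_C]
    split_ifs with hn
    · subst hn
      exact Submodule.mem_span_singleton.2 ⟨c, by simp [βPow, Algebra.smul_def]⟩
    · exact zero_mem _

theorem Pβ_mul_X_sq_mem : Pβ * X ^ 2 ∈ seriesInβXSq := by
  intro n
  rw [coeff_C_mul_X_pow]
  split_ifs with hn
  · subst hn
    exact Submodule.mem_span_singleton.2 ⟨1, by simp [βPow]⟩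
  · exact zero_mem _

theorem mem_seriesInβXSq_of_sq_eq {h : ℂ[ω,β]⟦X⟧} (hh2 : h ^ 2 = 1 + Pβ * X ^ 2)
    (hh0 : constantCoeff h = 1) : h ∈ seriesInβXSq := by
  set g := h - 1
  have hg0 : coeff 0 g = 0 := by simp [g, hh0]
  have hhalf : PowerSeries.C (MvPolynomial.C (2⁻¹ : ℂ)) * 2 = (1 : ℂ[ω,β]⟦X⟧) := by
    rw [← map_ofNat (PowerSeries.C (R := ℂ[ω,β])), ← map_ofNat MvPolynomial.C, ← map_mul,
      ← map_mul]
    norm_num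
  -- `g = (β X² - g²) / 2` determines `g` coefficient by coefficient
  have hg_eq : g = PowerSeries.C (MvPolynomial.C (2⁻¹ : ℂ)) * (Pβ * X ^ 2 - g * g) := by
    linear_combination PowerSeries.C (MvPolynomial.C (2⁻¹ : ℂ)) * hh2 - g * hhalf
  suffices g ∈ seriesInβXSq by simpa [g] using add_mem this (one_mem seriesInβXSq)
  intro n
  induction n using Nat.strong_induction_on with | _ n ih =>
  rw [hg_eq, coeff_C_mul, ← MvPolynomial.smul_eq_C_mul, map_sub, coeff_mul n g g]
  refine Submodule.smul_mem _ _
    (sub_mem (Pβ_mul_X_sq_mem n) (Submodule.sum_mem _ fun p hp => ?_))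
  obtain ⟨a, b⟩ := p
  have hab := Finset.HasAntidiagonal.mem_antidiagonal.1 hp
  rw [← hab]
  rcases Nat.eq_zero_or_pos a with rfl | ha
  · simp [hg0]
  rcases Nat.eq_zero_or_pos b with rfl | hb
  · simp [hg0]
  exact mul_mem_span_βPow (ih a (by simp at hab; omega)) (ih b (by simp at hab; omega))

noncomputable def evalβZero : ℂ[ω,β] →+* ℂ[ω,β] :=
  MvPolynomial.eval₂Hom MvPolynomial.C ![ω, 0]

@[simp] theorem evalβZero_C (c : ℂ) : evalβZero (MvPolynomial.C c) = MvPolynomial.C c := by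
  simp [evalβZero]

@[simp] theorem evalβZero_X_zero : evalβZero ω = ω := by simp [evalβZero]

@[simp] theorem evalβZero_X_one : evalβZero β = 0 := by simp [evalβZero]

theorem lt_order_of_coeff_mul_eq_zero {Q G : ℂ[ω,β]⟦X⟧} (hQ : Q ∈ seriesInβXSq)
    (hG : ∀ n, evalβZero (coeff n G) ≠ 0) {k : ℕ} (hQG : coeff k (Q * G) = 0) :
    (k : ℕ∞) < Q.order := by
  choose d hd using fun n => Submodule.mem_span_singleton.1 (hQ n)
  suffices ∀ n ≤ k, coeff n Q = 0 from (ENat.add_one_le_iff (ENat.natCast_ne_top k)).1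
    (nat_le_order Q (k + 1) fun i hi => this i (by omega))
  intro n
  induction n using Nat.strong_induction_on with | _ n ih =>
  intro hn
  obtain ⟨i, rfl | rfl⟩ := Nat.even_or_odd' n
  swap
  · rw [← hd, βPow, if_neg (Nat.not_even_two_mul_add_one i), smul_zero]
  have hsplit : β ^ (i + 1) ∣
      coeff k (Q * G) - MvPolynomial.C (d (2 * i)) * β ^ i * coeff (k - 2 * i) G := by
    rw [coeff_mul, Finset.Nat.sum_antidiagonal_eq_sum_range_succ_mk,
      ← Finset.add_sum_erase _ _ (Finset.mem_range.2 (by omega : 2 * i < k + 1)), ← hd,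
      βPow, if_pos (even_two_mul i), Nat.mul_div_cancel_left i two_pos,
      MvPolynomial.smul_eq_C_mul, add_sub_cancel_left]
    refine Finset.dvd_sum fun p hp => ?_
    obtain ⟨hp2i, -⟩ := Finset.mem_erase.1 hp
    rcases lt_or_gt_of_ne hp2i with hlt | hgt
    · rw [ih p (by omega) (by omega), zero_mul]
      exact dvd_zero _
    · rw [← hd, MvPolynomial.smul_eq_C_mul]
      exact Dvd.dvd.mul_right (Dvd.dvd.mul_left (pow_succ_dvd_βPow hgt) _) _
  rw [hQG, zero_sub, dvd_neg, pow_succ] at hsplit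
  obtain ⟨y, hy⟩ := (mul_dvd_mul_iff_left (pow_ne_zero i (MvPolynomial.X_ne_zero 1))).1
    (by convert hsplit using 1; ring :
      β ^ i * β ∣ β ^ i * (MvPolynomial.C (d (2 * i)) * coeff (k - 2 * i) G))
  have hdi : d (2 * i) = 0 := by
    have := congrArg evalβZero hy
    rw [map_mul, map_mul, evalβZero_C, evalβZero_X_one, zero_mul] at this
    exact MvPolynomial.C_eq_zero.1 ((mul_eq_zero.1 this).resolve_right (hG _))
  rw [← hd, hdi, zero_smul]

theorem mul_derivative_eq_of_sq_eq {h : ℂ[ω,β]⟦X⟧} (hh2 : h ^ 2 = 1 + Pβ * X ^ 2) :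
    h * d⁄dX ℂ[ω,β] h = Pβ * X := by
  have hd := congrArg (d⁄dX ℂ[ω,β]) hh2
  simp only [derivative_pow, map_add, derivative_one, Derivation.leibniz, derivative_C,
    derivative_X, smul_eq_mul] at hd
  refine mul_left_cancel₀ (two_ne_zero (α := ℂ[ω,β]⟦X⟧)) ?_
  linear_combination hd

theorem eq_one_add_mul_of_derivative_eq {h E F : ℂ[ω,β]⟦X⟧} {s : ℂ}
    (hh2 : h ^ 2 = 1 + Pβ * X ^ 2) (hh0 : constantCoeff h = 1)
    (hE : 2 * (h * (1 + h)) * d⁄dX ℂ[ω,β] E =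
      PowerSeries.C (MvPolynomial.C (s - 1)) * (Pβ * X * E))
    (hF : 2 * (h * (1 + h)) * d⁄dX ℂ[ω,β] F =
      PowerSeries.C (MvPolynomial.C (s + 1)) * (Pβ * X * F))
    (h0 : constantCoeff F = 2 * constantCoeff E) :
    F = (1 + h) * E := by
  set cE : ℂ[ω,β]⟦X⟧ := PowerSeries.C (MvPolynomial.C (s - 1))
  set cF : ℂ[ω,β]⟦X⟧ := PowerSeries.C (MvPolynomial.C (s + 1))
  have hs : cF = cE + 2 := by
    simp only [cF, cE]
    rw [show s + 1 = s - 1 + 2 by ring, map_add, map_add, map_ofNat, map_ofNat]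
  refine sub_eq_zero.1 (eq_zero_of_mul_derivative_eq_mul (u := 2 * (h * (1 + h)))
    (v := cF * (Pβ * X)) ?_ ?_ ?_)
  · simp [hh0, map_ofNat]
  · simp [hh0, h0]
    ring
  · simp only [map_sub, Derivation.leibniz, map_add, derivative_one, smul_eq_mul]
    linear_combination hF - (1 + h) * hE - 2 * (1 + h) * E * mul_derivative_eq_of_sq_eq hh2
      + (1 + h) * Pβ * X * E * hs

theorem evalβZero_coeff_ne_zero {h A B Cc Dr : ℂ[ω,β]⟦X⟧} {c : ℂ[ω,β]}
    (hh2 : h ^ 2 = 1 + Pβ * X ^ 2) (hh0 : constantCoeff h = 1)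
    (hA0 : constantCoeff A = 1)
    (hA : 2 * (1 + Pβ * X ^ 2) * d⁄dX ℂ[ω,β] A = -3 * (Pβ * X * A))
    (hB0 : constantCoeff B = 1)
    (hB : (1 + Pβ * X ^ 2) * d⁄dX ℂ[ω,β] B = -Pω * B)
    (hC2 : Cc ^ 2 = 2 + 2 * h) (hC0 : constantCoeff Cc = 2)
    (hDr0 : evalβZero (constantCoeff Dr) ≠ 0)
    (hDr : 2 * (h * (1 + h)) * d⁄dX ℂ[ω,β] Dr = PowerSeries.C c * (Pβ * X * Dr)) (n : ℕ) :
    evalβZero (coeff n (A * B * Cc * Dr)) ≠ 0 := by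
  set φ : ℂ[ω,β]⟦X⟧ →+* ℂ[ω,β]⟦X⟧ := PowerSeries.map evalβZero
  have hφβ (f : ℂ[ω,β]⟦X⟧) : φ (Pβ * f) = 0 := by simp [φ]
  have hφ1 : φ (1 + Pβ * X ^ 2) = 1 := by rw [map_add, map_one, hφβ, add_zero]
  have hφh : φ h = 1 :=
    eq_of_sq_eq_sq (by rw [← map_pow, hh2, hφ1, one_pow]) (by simp [φ, hh0]) (by simp)
  have hφA : φ A = 1 := by
    have hd : d⁄dX ℂ[ω,β] (φ A) = 0 := by
      have := congrArg φ hA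
      rw [map_mul, map_mul, hφ1, mul_one, ← derivative_map, map_mul, mul_assoc Pβ, hφβ,
        mul_zero, map_ofNat] at this
      exact (mul_eq_zero.1 this).resolve_left two_ne_zero
    rw [eq_C_of_derivative_eq_zero hd]
    simp [φ, hA0]
  have hφC : φ Cc = 2 :=
    eq_of_sq_eq_sq (by rw [← map_pow, hC2, map_add, map_mul, hφh, map_ofNat]; norm_num)
      (by simp [φ, hC0, map_ofNat]) (by simp [map_ofNat])
  have hφD : φ Dr = PowerSeries.C (evalβZero (constantCoeff Dr)) := by
    have hd : d⁄dX ℂ[ω,β] (φ Dr) = 0 := by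
      have := congrArg φ hDr
      rw [map_mul, map_mul, map_mul, map_add, map_one, hφh, ← derivative_map, map_mul,
        mul_assoc Pβ, hφβ, mul_zero, map_ofNat] at this
      exact (mul_eq_zero.1 this).resolve_left (by norm_num)
    rw [eq_C_of_derivative_eq_zero hd]
    simp [φ]
  have hφB : d⁄dX ℂ[ω,β] (φ B) = PowerSeries.C (-ω) * φ B := by
    have := congrArg φ hB
    rw [map_mul, hφ1, one_mul, ← derivative_map, map_mul, map_neg, map_C,
      evalβZero_X_zero] at this
    rw [map_neg]
    exact this
  have hB' := coeff_ne_zero_of_derivative_eq_C_mul (neg_ne_zero.2 (MvPolynomial.X_ne_zero 0))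
    hφB (by simp [φ, hB0]) n
  have hφG : φ (A * B * Cc * Dr) =
      PowerSeries.C (2 * evalβZero (constantCoeff Dr)) * φ B := by
    rw [map_mul, map_mul, map_mul, hφA, hφC, hφD, map_mul, map_ofNat]
    ring
  rw [← coeff_map, show map evalβZero (A * B * Cc * Dr) = φ (A * B * Cc * Dr) from rfl, hφG,
    coeff_C_mul]
  exact mul_ne_zero (mul_ne_zero two_ne_zero hDr0) hB'

theorem order_sub_one_of_sq_eq {h : ℂ[ω,β]⟦X⟧} (hh2 : h ^ 2 = 1 + Pβ * X ^ 2)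
    (hh0 : constantCoeff h = 1) : (h - 1).order = 2 := by
  have hprod : (h - 1) * (h + 1) = Pβ * X ^ 2 := by linear_combination hh2
  have := congrArg order hprod
  rw [order_mul, order_eq_zero_of_constantCoeff_ne_zero (f := h + 1) (by simp [hh0]), add_zero,
    order_mul, order_eq_zero_of_constantCoeff_ne_zero (f := Pβ) (by simp), order_X_pow,
    zero_add] at this
  exact_mod_cast this

theorem eq_zero_of_coeff_aeval_mul_eq_zero {h G : ℂ[ω,β]⟦X⟧} (hh2 : h ^ 2 = 1 + Pβ * X ^ 2)
    (hh0 : constantCoeff h = 1) (hG : ∀ n, evalβZero (coeff n G) ≠ 0) {P : Polynomial ℂ}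
    {k : ℕ} (hPk : 2 * P.natDegree ≤ k) (hPG : coeff k (Polynomial.aeval (1 + h) P * G) = 0) :
    P = 0 := by
  classical
  by_contra hP
  have hh : 1 + h ∈ seriesInβXSq := add_mem (one_mem _) (mem_seriesInβXSq_of_sq_eq hh2 hh0)
  have hQ : Polynomial.aeval (1 + h) P ∈ seriesInβXSq :=
    Algebra.adjoin_le (Set.singleton_subset_iff.2 hh) (Polynomial.aeval_mem_adjoin_singleton ℂ _)
  have hlt := lt_order_of_coeff_mul_eq_zero hQ hG hPG
  have h1h : 1 + h - algebraMap ℂ ℂ[ω,β]⟦X⟧ 2 = h - 1 := by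
    rw [map_ofNat]
    ring
  rw [order_aeval (1 + h) 2 (by simp [hh0, map_ofNat]; norm_num) hP, h1h,
    order_sub_one_of_sq_eq hh2 hh0] at hlt
  have hmult : P.rootMultiplicity 2 ≤ P.natDegree :=
    (Polynomial.count_roots P ▸ Multiset.count_le_card _ _).trans P.card_roots'
  have : (k : ℕ∞) < (P.rootMultiplicity 2 * 2 : ℕ) := by simpa [nsmul_eq_mul] using hlt
  have := Nat.cast_lt.1 this
  omega

theorem series_add_two_mul_eq_one_add_pow_mul {h A B Cc : ℂ[ω,β]⟦X⟧}
    {D G : ℤ → ℂ[ω,β]⟦X⟧} (hh2 : h ^ 2 = 1 + Pβ * X ^ 2) (hh0 : constantCoeff h = 1)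
    (hD0 : ∀ r : ℤ, Odd r → constantCoeff (D r) = MvPolynomial.C ((2 : ℂ) ^ ((r - 1) / 2)))
    (hD : ∀ r : ℤ, Odd r → 2 * (h * (1 + h)) * d⁄dX ℂ[ω,β] (D r)
      = PowerSeries.C (MvPolynomial.C ((r : ℂ) - 1)) * (Pβ * X * D r))
    (hG : ∀ r : ℤ, Odd r → G r = A * B * Cc * D r) {r : ℤ} (hr : Odd r) (j : ℕ) :
    G (r + 2 * j) = (1 + h) ^ j * G r := by
  have hDshift (s : ℤ) (hs : Odd s) : D (s + 2) = (1 + h) * D s := by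
    have hD2 := hD (s + 2) (hs.add_even even_two)
    rw [show ((s + 2 : ℤ) : ℂ) - 1 = (s : ℂ) + 1 by push_cast; ring] at hD2
    refine eq_one_add_mul_of_derivative_eq hh2 hh0 (hD s hs) hD2 ?_
    obtain ⟨t, rfl⟩ := hs
    rw [hD0 _ ⟨t + 1, by ring⟩, hD0 _ ⟨t, rfl⟩,
      show (2 * t + 1 + 2 - 1) / 2 = t + 1 by omega, show (2 * t + 1 - 1) / 2 = t by omega,
      zpow_add_one₀ two_ne_zero, map_mul, map_ofNat]
    ring
  induction j with
  | zero => simp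
  | succ j ih =>
    have hodd : Odd (r + 2 * j) := hr.add_even (even_two_mul _)
    rw [show r + 2 * ((j + 1 : ℕ) : ℤ) = r + 2 * j + 2 by push_cast; ring,
      hG _ (hodd.add_even even_two), hDshift _ hodd, pow_succ]
    linear_combination (1 + h) * ((hG _ hodd).symm.trans ih)

end Stmt8

open Stmt8 in
theorem stmt8
    (h A B Cc : PowerSeries (MvPolynomial (Fin 2) ℂ))
    (D G : ℤ → PowerSeries (MvPolynomial (Fin 2) ℂ))
    (hh2 : h ^ 2 = 1 + Pβ * X ^ 2)
    (hh0 : constantCoeff h = 1)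
    (hA0 : constantCoeff A = 1)
    (hA : 2 * (1 + Pβ * X ^ 2) * A.derivativeFun = -3 * (Pβ * X * A))
    (hB0 : constantCoeff B = 1)
    (hB : (1 + Pβ * X ^ 2) * B.derivativeFun = -Pω * B)
    (hC2 : Cc ^ 2 = 2 + 2 * h)
    (hC0 : constantCoeff Cc = 2)
    (hD0 : ∀ r : ℤ, Odd r →
      constantCoeff (D r) = MvPolynomial.C ((2 : ℂ) ^ ((r - 1) / 2)))
    (hD : ∀ r : ℤ, Odd r →
      2 * (h * (1 + h)) * (D r).derivativeFun
        = PowerSeries.C (MvPolynomial.C ((r : ℂ) - 1)) * (Pβ * X * D r))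
    (hG : ∀ r : ℤ, Odd r → G r = A * B * Cc * D r)
    (k : ℕ) (r : ℤ) (hr : Odd r) :
    LinearIndependent ℂ
      (fun j : Fin (k / 2 + 1) =>
        PowerSeries.coeff k (G (r + 2 * (j : ℕ)))) := by
  have hGshift := series_add_two_mul_eq_one_add_pow_mul hh2 hh0 hD0 hD hG hr
  have hGr (n : ℕ) : evalβZero (coeff n (G r)) ≠ 0 := by
    rw [hG r hr]
    exact evalβZero_coeff_ne_zero hh2 hh0 hA0 hA hB0 hB hC2 hC0
      (by simpa [hD0 r hr] using zpow_ne_zero ((r - 1) / 2) (two_ne_zero (α := ℂ))) (hD r hr) n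
  rw [Fintype.linearIndependent_iff]
  intro c hc
  set P : Polynomial ℂ := ∑ j : Fin (k / 2 + 1), Polynomial.C (c j) * Polynomial.X ^ (j : ℕ)
  have hP : P = 0 := by
    refine eq_zero_of_coeff_aeval_mul_eq_zero hh2 hh0 hGr (k := k) ?_ ?_
    · have hdeg : P.natDegree ≤ k / 2 := Polynomial.natDegree_sum_le_of_forall_le _ _ fun j _ =>
        (Polynomial.natDegree_C_mul_X_pow_le _ _).trans (Nat.lt_succ_iff.1 j.isLt)
      omega
    · rw [← hc, map_sum, Finset.sum_mul, map_sum]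
      refine Finset.sum_congr rfl fun j _ => ?_
      rw [hGshift, map_mul (Polynomial.aeval (1 + h)), Polynomial.aeval_C, map_pow,
        Polynomial.aeval_X, mul_assoc, ← Algebra.smul_def, coeff_smul]
  intro j
  simpa [P, Polynomial.finsetSum_coeff, Polynomial.coeff_C_mul_X_pow, Fin.val_inj] using
    congrArg (Polynomial.coeff · j) hP
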